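/- (Telescoping Bregman divergence bound.) Run Algorithm 1 and let q_t(j) = Σ_{i∈[K]} w′_t(i,j). Fix an interval {t₁,…,t₂} ⊆ [T], a comparator u ∈ Δ_K, and an index j* ∈ ⋂_{t=t₁}^{t₂} 𝒥_t, and define ū ∈ Δ_{K×M} by ū(i,j*) = (1 − 1/T³)·u(i) + ε and ū(i,j) = ε for j ≠ j*. Then Σ_{t=t₁}^{t₂} ( D_ψ(ū, w′_t) − D_ψ(ū, w′_{t+1}) ) = D_ψ(ū, w′_{t₁}) − D_ψ(ū, w′_{t₂+1}) ≤ 4·log(K·M·T)/η(j*) + 32·log(K·M·T)/T² + Σ_{j∈[M]} ( q_{t₁}(j) − q_{t₂+1}(j) )/η(j). -/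

import Mathlib

open Finset

namespace OMS

/-- Number of learning rates: `M = ⌈log₂ T²⌉`. -/
def numLR (T : ℕ) : ℕ := Nat.clog 2 (T ^ 2)

/-- Learning rate `η(j) = 2^j / (16 T)`; `j : Fin (numLR T)` represents index `j+1 ∈ [M]`. -/
noncomputable def lr (T : ℕ) (j : Fin (numLR T)) : ℝ := 2 ^ ((j : ℕ) + 1) / (16 * T)

/-- Lower threshold `ε = 1/(K·M·T³)`. -/
noncomputable def epsLB (K T : ℕ) : ℝ := 1 / (K * numLR T * T ^ 3)

/-- Probability simplex on `Fin K`. -/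
def simplex (K : ℕ) : Set (Fin K → ℝ) :=
  {p | (∀ i, 0 ≤ p i) ∧ ∑ i, p i = 1}

/-- Probability simplex on expert × learning-rate pairs. -/
def simplex2 (K T : ℕ) : Set (Fin K → Fin (numLR T) → ℝ) :=
  {w | (∀ i j, 0 ≤ w i j) ∧ ∑ i, ∑ j, w i j = 1}

/-- Weighted negative-entropy regularizer `ψ`. -/
noncomputable def psi (K T : ℕ) (w : Fin K → Fin (numLR T) → ℝ) : ℝ :=
  ∑ i, ∑ j, (1 / lr T j) * w i j * Real.log (w i j)

/-- Bregman divergence `D_ψ(y,x)` of the weighted negative-entropy regularizer. -/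
noncomputable def breg (K T : ℕ) (y x : Fin K → Fin (numLR T) → ℝ) : ℝ :=
  psi K T y - psi K T x -
    ∑ i, ∑ j, (1 / lr T j) * (Real.log (x i j) + 1) * (y i j - x i j)

/-- Decision set `Ω` for an active set `J` of learning rates. -/
def decisionSet (K T : ℕ) (J : Set (Fin (numLR T))) :
    Set (Fin K → Fin (numLR T) → ℝ) :=
  {w | w ∈ simplex2 K T ∧ (∀ i, ∀ j ∈ J, epsLB K T ≤ w i j) ∧
      (∀ i, ∀ j, j ∉ J → w i j = epsLB K T)}

/-- A run of Algorithm 1: trajectories of losses, predictions, weights, penalties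
and played distributions. -/
structure Run (K T : ℕ) where
  loss : ℕ → Fin K → ℝ
  pred : ℕ → Fin K → ℝ
  w' : ℕ → Fin K → Fin (numLR T) → ℝ
  w : ℕ → Fin K → Fin (numLR T) → ℝ
  L : ℕ → Fin (numLR T) → ℝ
  p : ℕ → Fin K → ℝ

variable {K T : ℕ}

/-- Prediction error `r_t(i) = ℓ_t(i) − m_t(i)`. -/
def Run.r (R : Run K T) (t : ℕ) (i : Fin K) : ℝ := R.loss t i - R.pred t i

/-- Active set `𝒥_t = {j : L_t(j) ≤ 1}`. -/
def Run.Jset (R : Run K T) (t : ℕ) : Set (Fin (numLR T)) := {j | R.L t j ≤ 1}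

open Classical in
/-- Active set `𝒥_t` as a finite set. -/
noncomputable def Run.Jfin (R : Run K T) (t : ℕ) : Finset (Fin (numLR T)) :=
  Finset.univ.filter fun j => R.L t j ≤ 1

/-- Correction term `a_t(i,j) = 32 η(j) r_t(i)²`. -/
noncomputable def Run.corr (R : Run K T) (t : ℕ) (i : Fin K) (j : Fin (numLR T)) : ℝ :=
  32 * lr T j * (R.r t i) ^ 2

open Classical in
/-- The constraints defining a run of Algorithm 1. -/
structure IsRun (R : Run K T) : Prop where
  loss_mem : ∀ t ∈ Finset.Icc 1 T, ∀ i, R.loss t i ∈ Set.Icc (0 : ℝ) 1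
  pred_mem : ∀ t ∈ Finset.Icc 1 T, ∀ i, R.pred t i ∈ Set.Icc (0 : ℝ) 1
  w'_init : ∀ i j, R.w' 1 i j = lr T j ^ 2 / (K * ∑ j', lr T j' ^ 2)
  L_init : ∀ j, R.L 1 j = 0
  w_mem : ∀ t ∈ Finset.Icc 1 T, R.w t ∈ decisionSet K T (R.Jset t)
  w_min : ∀ t ∈ Finset.Icc 1 T, ∀ v ∈ decisionSet K T (R.Jset t),
      (∑ i, ∑ j, R.pred t i * R.w t i j) + breg K T (R.w t) (R.w' t) ≤
      (∑ i, ∑ j, R.pred t i * v i j) + breg K T v (R.w' t)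
  p_def : ∀ t ∈ Finset.Icc 1 T, ∀ i, R.p t i =
      (∑ j ∈ R.Jfin t, R.w t i j) / (∑ i', ∑ j ∈ R.Jfin t, R.w t i' j)
  w'_mem : ∀ t ∈ Finset.Icc 1 T, R.w' (t + 1) ∈ decisionSet K T (R.Jset t)
  w'_min : ∀ t ∈ Finset.Icc 1 T, ∀ v ∈ decisionSet K T (R.Jset t),
      (∑ i, ∑ j, (R.loss t i + R.corr t i j) * R.w' (t + 1) i j) +
        breg K T (R.w' (t + 1)) (R.w' t) ≤
      (∑ i, ∑ j, (R.loss t i + R.corr t i j) * v i j) + breg K T v (R.w' t)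
  L_upd : ∀ t ∈ Finset.Icc 1 T, ∀ j, R.L (t + 1) j = R.L t j +
      ∑ i, (if 1 < 32 * lr T j * |R.r t i| then R.w t i j * R.r t i else 0)

end OMS

/-!
Expanding both Bregman divergences, `D(ū, w'_{t₁}) - D(ū, w'_{t₂+1})` splits into the drift
`∑ ū(i,j) / η(j) · log (w'_{t₂+1}(i,j) / w'_{t₁}(i,j))` and the mass term
`∑_j (q_{t₁}(j) - q_{t₂+1}(j)) / η(j)`. Every `w'_t` is a probability vector bounded below by
`1 / (K M T⁴)` (by `ε` after the first round, by the choice of `w'₁` before it), so each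
log-ratio is at most `log (K M T⁴) ≤ 4 log (K M T)`. Finally `∑ ū(i,j) / η(j) ≤ 1/η(j*) + 8/T²`:
`ū` has mass at most `1` in column `j*` and only `ε` per entry elsewhere, while `1/η(j) ≤ 8 T`.
-/

lemma Real.log_mul_pow_le {x y : ℝ} (hx : 1 ≤ x) (hy : 0 < y) {n : ℕ} (hn : n ≠ 0) :
    Real.log (x * y ^ n) ≤ n * Real.log (x * y) := by
  rw [← Real.log_pow, mul_pow]
  gcongr
  exact le_self_pow₀ hx hn

namespace OMS

variable {K T : ℕ}

lemma one_lt_of_fin_numLR (j : Fin (numLR T)) : 1 < T := by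
  by_contra! hT
  have : numLR T = 0 := Nat.clog_of_right_le_one (by nlinarith) 2
  exact (this ▸ j).elim0

lemma lr_pos (j : Fin (numLR T)) : 0 < lr T j := by
  have hT := one_lt_of_fin_numLR j
  unfold lr
  positivity

lemma inv_lr_le (j : Fin (numLR T)) : (lr T j)⁻¹ ≤ 8 * T := by
  have hj : (2 : ℝ) ≤ 2 ^ ((j : ℕ) + 1) := by
    simpa using pow_le_pow_right₀ (by norm_num : (1 : ℝ) ≤ 2) (Nat.le_add_left 1 j)
  have hT : (0 : ℝ) < T := by exact_mod_cast (one_lt_of_fin_numLR j).le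
  rw [lr, inv_div, div_le_iff₀ (by positivity)]
  nlinarith

lemma lr_le (j : Fin (numLR T)) : lr T j ≤ T / 8 := by
  have hj : (2 : ℝ) ^ (j : ℕ) < T ^ 2 := by exact_mod_cast Nat.pow_lt_of_lt_clog j.isLt
  have hT : (0 : ℝ) < T := by exact_mod_cast (one_lt_of_fin_numLR j).le
  rw [lr, div_le_div_iff₀ (by positivity) (by norm_num), pow_succ]
  nlinarith

lemma one_div_le_lr_sq_div (i : Fin K) (j : Fin (numLR T)) :
    1 / (K * numLR T * T ^ 4 : ℝ) ≤ lr T j ^ 2 / (K * ∑ j', lr T j' ^ 2) := by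
  have hT : (0 : ℝ) < T := by exact_mod_cast (one_lt_of_fin_numLR j).le
  have hK : (0 : ℝ) < K := by exact_mod_cast i.pos
  have hlr_sq : ((8 * T : ℝ)⁻¹) ^ 2 ≤ lr T j ^ 2 := by
    gcongr
    exact inv_le_of_inv_le₀ (lr_pos j) (inv_lr_le j)
  have hsum : ∑ j', lr T j' ^ 2 ≤ numLR T * (T / 8 : ℝ) ^ 2 := by
    simpa using Finset.sum_le_card_nsmul univ _ _ fun j' _ =>
      pow_le_pow_left₀ (lr_pos j').le (lr_le j') 2
  have hsum_pos : 0 < ∑ j', lr T j' ^ 2 :=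
    Finset.sum_pos (fun j' _ => pow_pos (lr_pos j') 2) ⟨j, mem_univ j⟩
  calc 1 / (K * numLR T * T ^ 4 : ℝ)
      = ((8 * T : ℝ)⁻¹) ^ 2 / (K * (numLR T * (T / 8 : ℝ) ^ 2)) := by
        field_simp
    _ ≤ lr T j ^ 2 / (K * ∑ j', lr T j' ^ 2) := by gcongr

lemma epsLB_nonneg : 0 ≤ epsLB K T := by
  unfold epsLB
  positivity

lemma epsLB_le_of_mem_decisionSet {J : Set (Fin (numLR T))} {w : Fin K → Fin (numLR T) → ℝ}
    (hw : w ∈ decisionSet K T J) (i : Fin K) (j : Fin (numLR T)) : epsLB K T ≤ w i j := by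
  by_cases hj : j ∈ J
  · exact hw.2.1 i j hj
  · exact (hw.2.2 i j hj).ge

lemma le_one_of_mem_simplex2 {w : Fin K → Fin (numLR T) → ℝ} (hw : w ∈ simplex2 K T)
    (i : Fin K) (j : Fin (numLR T)) : w i j ≤ 1 :=
  calc w i j ≤ ∑ j', w i j' := single_le_sum (fun j' _ => hw.1 i j') (mem_univ j)
    _ ≤ ∑ i', ∑ j', w i' j' :=
        single_le_sum (fun i' _ => sum_nonneg fun j' _ => hw.1 i' j') (mem_univ i)
    _ = 1 := hw.2

lemma IsRun.one_div_le_w' {R : Run K T} (hR : IsRun R) {t : ℕ} (ht : t ∈ Icc 1 (T + 1))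
    (i : Fin K) (j : Fin (numLR T)) : 1 / (K * numLR T * T ^ 4 : ℝ) ≤ R.w' t i j := by
  obtain ⟨ht₁, htT⟩ := mem_Icc.1 ht
  rcases ht₁.eq_or_lt with rfl | ht₁
  · rw [hR.w'_init i j]
    exact one_div_le_lr_sq_div i j
  obtain ⟨s, rfl⟩ : ∃ s, t = s + 1 := ⟨t - 1, by omega⟩
  have hs : s ∈ Icc 1 T := mem_Icc.2 ⟨by omega, by omega⟩
  refine le_trans ?_ (epsLB_le_of_mem_decisionSet (hR.w'_mem s hs) i j)
  have hT : (1 : ℝ) ≤ T := by exact_mod_cast (one_lt_of_fin_numLR j).le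
  have hKM : (0 : ℝ) < K * numLR T := by
    exact_mod_cast Nat.mul_pos i.pos (Fin.pos j)
  rw [epsLB]
  exact one_div_le_one_div_of_le (by positivity)
    (mul_le_mul_of_nonneg_left (pow_le_pow_right₀ hT (by norm_num)) hKM.le)

lemma IsRun.log_w'_sub_log_w'_le {R : Run K T} (hR : IsRun R) {s t : ℕ} (hs : s ∈ Icc 1 T)
    (ht : t ∈ Icc 1 (T + 1)) (i : Fin K) (j : Fin (numLR T)) :
    Real.log (R.w' (s + 1) i j) - Real.log (R.w' t i j) ≤ 4 * Real.log (K * numLR T * T) := by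
  have hT : (0 : ℝ) < T := by exact_mod_cast (one_lt_of_fin_numLR j).le
  have hKM : (1 : ℝ) ≤ K * numLR T := by
    exact_mod_cast Nat.one_le_iff_ne_zero.2 (Nat.mul_pos i.pos (Fin.pos j)).ne'
  have hupper : Real.log (R.w' (s + 1) i j) ≤ 0 :=
    Real.log_nonpos ((hR.w'_mem s hs).1.1 i j) (le_one_of_mem_simplex2 (hR.w'_mem s hs).1 i j)
  have hlower : Real.log (1 / (K * numLR T * T ^ 4 : ℝ)) ≤ Real.log (R.w' t i j) :=
    Real.log_le_log (by positivity) (hR.one_div_le_w' ht i j)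
  rw [one_div, Real.log_inv] at hlower
  have := Real.log_mul_pow_le hKM hT (n := 4) (by norm_num)
  push_cast at this
  linarith

lemma breg_sub_breg (y x x' : Fin K → Fin (numLR T) → ℝ) :
    breg K T y x - breg K T y x' =
      ∑ i, ∑ j, y i j / lr T j * (Real.log (x' i j) - Real.log (x i j)) +
      ∑ j, ((∑ i, x i j) - ∑ i, x' i j) / lr T j := by
  have hmass : ∑ j, ((∑ i, x i j) - ∑ i, x' i j) / lr T j =
      ∑ i, ∑ j, (x i j - x' i j) / lr T j := by
    simp only [← sum_sub_distrib, sum_div]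
    exact sum_comm
  rw [hmass, ← sum_add_distrib]
  simp only [breg, psi, ← sum_sub_distrib, ← sum_add_distrib]
  refine sum_congr rfl fun i _ => sum_congr rfl fun j _ => ?_
  ring

lemma pos_of_mem_simplex {u : Fin K → ℝ} (hu : u ∈ simplex K) : 0 < K :=
  Nat.pos_of_ne_zero fun h => by subst h; simp [simplex] at hu

/-- The paper's `ū`. -/
noncomputable def embedComparator (K T : ℕ) (u : Fin K → ℝ) (jstar : Fin (numLR T))
    (i : Fin K) (j : Fin (numLR T)) : ℝ :=
  if j = jstar then (1 - 1 / (T : ℝ) ^ 3) * u i + epsLB K T else epsLB K T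

lemma embedComparator_nonneg {u : Fin K → ℝ} (hu : u ∈ simplex K)
    (jstar : Fin (numLR T)) (i : Fin K) (j : Fin (numLR T)) :
    0 ≤ embedComparator K T u jstar i j := by
  have hT := one_lt_of_fin_numLR j
  have hT3 : 1 / (T : ℝ) ^ 3 ≤ 1 := by
    rw [div_le_one (by positivity)]
    exact one_le_pow₀ (by exact_mod_cast hT.le)
  unfold embedComparator
  split_ifs
  · exact add_nonneg (mul_nonneg (by linarith) (hu.1 i)) epsLB_nonneg
  · exact epsLB_nonneg

lemma sum_sum_embedComparator_div_lr_le {u : Fin K → ℝ} (hu : u ∈ simplex K)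
    (jstar : Fin (numLR T)) :
    ∑ i, ∑ j, embedComparator K T u jstar i j / lr T j ≤
      1 / lr T jstar + 8 / (T : ℝ) ^ 2 := by
  have hT : (0 : ℝ) < T := by exact_mod_cast (one_lt_of_fin_numLR jstar).le
  have hsplit : ∀ i j, embedComparator K T u jstar i j / lr T j =
      (if jstar = j then (1 - 1 / (T : ℝ) ^ 3) * u i / lr T jstar else 0) +
        epsLB K T / lr T j := by
    intro i j
    by_cases h : j = jstar
    · subst h
      simp only [embedComparator, if_true]
      ring
    · simp [embedComparator, h, Ne.symm h]
  simp only [hsplit, sum_add_distrib, sum_ite_eq, mem_univ, if_true, ← sum_div, ← mul_sum,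
    hu.2, sum_const, card_univ, Fintype.card_fin, nsmul_eq_mul]
  have hK : (0 : ℝ) < K := by exact_mod_cast pos_of_mem_simplex hu
  have hM : (0 : ℝ) < numLR T := by exact_mod_cast jstar.pos
  have hcol : (1 - 1 / (T : ℝ) ^ 3) * 1 / lr T jstar ≤ 1 / lr T jstar := by
    have : 0 ≤ 1 / (T : ℝ) ^ 3 := by positivity
    exact div_le_div_of_nonneg_right (by linarith) (lr_pos jstar).le
  have hfloor : ∑ j, epsLB K T / lr T j ≤ numLR T * (epsLB K T * (8 * T)) := by
    simpa [div_eq_mul_inv] using sum_le_card_nsmul univ _ _ fun j _ =>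
      mul_le_mul_of_nonneg_left (inv_lr_le j) epsLB_nonneg
  have hmass : (K : ℝ) * (numLR T * (epsLB K T * (8 * T))) = 8 / (T : ℝ) ^ 2 := by
    unfold epsLB
    field_simp
  have := mul_le_mul_of_nonneg_left hfloor hK.le
  linarith

end OMS

open OMS in
theorem telescoping_bregman_bound_general (K T : ℕ)
    (R : OMS.Run K T) (hR : OMS.IsRun R)
    (t₁ t₂ : ℕ) (ht₁ : 1 ≤ t₁) (ht₁₂ : t₁ ≤ t₂) (ht₂ : t₂ ≤ T)
    (u : Fin K → ℝ) (hu : u ∈ OMS.simplex K)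
    (jstar : Fin (OMS.numLR T))
    (ubar : Fin K → Fin (OMS.numLR T) → ℝ)
    (hubar : ∀ i j, ubar i j =
      if j = jstar then (1 - 1 / (T : ℝ) ^ 3) * u i + OMS.epsLB K T
      else OMS.epsLB K T) :
    (∑ t ∈ Finset.Icc t₁ t₂,
        (OMS.breg K T ubar (R.w' t) - OMS.breg K T ubar (R.w' (t + 1)))
      = OMS.breg K T ubar (R.w' t₁) - OMS.breg K T ubar (R.w' (t₂ + 1))) ∧
    OMS.breg K T ubar (R.w' t₁) - OMS.breg K T ubar (R.w' (t₂ + 1)) ≤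
      4 * Real.log ((K : ℝ) * OMS.numLR T * T) / OMS.lr T jstar
      + 32 * Real.log ((K : ℝ) * OMS.numLR T * T) / (T : ℝ) ^ 2
      + ∑ j, ((∑ i, R.w' t₁ i j) - ∑ i, R.w' (t₂ + 1) i j) / OMS.lr T j := by
  refine ⟨by simpa only [neg_sub_neg] using
    sum_Icc_sub (f := fun t => -breg K T ubar (R.w' t)) ht₁₂, ?_⟩
  obtain rfl : ubar = embedComparator K T u jstar := funext₂ hubar
  set L := Real.log ((K : ℝ) * numLR T * T)
  have hL : 0 ≤ L := by
    have hKMT : 1 ≤ K * numLR T * T :=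
      Nat.mul_pos (Nat.mul_pos (pos_of_mem_simplex hu) jstar.pos) (by omega)
    exact Real.log_nonneg (by exact_mod_cast hKMT)
  have hlog : ∀ i j, Real.log (R.w' (t₂ + 1) i j) - Real.log (R.w' t₁ i j) ≤ 4 * L :=
    hR.log_w'_sub_log_w'_le (mem_Icc.2 ⟨by omega, ht₂⟩) (mem_Icc.2 ⟨ht₁, by omega⟩)
  have hdrift : ∑ i, ∑ j, embedComparator K T u jstar i j / lr T j *
      (Real.log (R.w' (t₂ + 1) i j) - Real.log (R.w' t₁ i j)) ≤
      4 * L / lr T jstar + 32 * L / (T : ℝ) ^ 2 :=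
    calc _ ≤ ∑ i, ∑ j, embedComparator K T u jstar i j / lr T j * (4 * L) := by
          gcongr with i _ j _
          · exact div_nonneg (embedComparator_nonneg hu jstar i j) (lr_pos j).le
          · exact hlog i j
      _ = 4 * L * ∑ i, ∑ j, embedComparator K T u jstar i j / lr T j := by
          simp only [mul_sum, mul_comm]
      _ ≤ 4 * L * (1 / lr T jstar + 8 / (T : ℝ) ^ 2) := by
          gcongr
          exact sum_sum_embedComparator_div_lr_le hu jstar
      _ = 4 * L / lr T jstar + 32 * L / (T : ℝ) ^ 2 := by ring
  rw [breg_sub_breg]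
  linarith

open OMS in
/-- Telescoping Bregman divergence bound along an interval. -/
theorem telescoping_bregman_bound (K T : ℕ) (hK : 1 ≤ K) (hT : 2 ≤ T)
    (R : OMS.Run K T) (hR : OMS.IsRun R)
    (t₁ t₂ : ℕ) (ht₁ : 1 ≤ t₁) (ht₁₂ : t₁ ≤ t₂) (ht₂ : t₂ ≤ T)
    (u : Fin K → ℝ) (hu : u ∈ OMS.simplex K)
    (jstar : Fin (OMS.numLR T))
    (hjstar : ∀ t ∈ Finset.Icc t₁ t₂, jstar ∈ R.Jset t)
    (ubar : Fin K → Fin (OMS.numLR T) → ℝ)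
    (hubar : ∀ i j, ubar i j =
      if j = jstar then (1 - 1 / (T : ℝ) ^ 3) * u i + OMS.epsLB K T
      else OMS.epsLB K T) :
    (∑ t ∈ Finset.Icc t₁ t₂,
        (OMS.breg K T ubar (R.w' t) - OMS.breg K T ubar (R.w' (t + 1)))
      = OMS.breg K T ubar (R.w' t₁) - OMS.breg K T ubar (R.w' (t₂ + 1))) ∧
    OMS.breg K T ubar (R.w' t₁) - OMS.breg K T ubar (R.w' (t₂ + 1)) ≤
      4 * Real.log ((K : ℝ) * OMS.numLR T * T) / OMS.lr T jstar
      + 32 * Real.log ((K : ℝ) * OMS.numLR T * T) / (T : ℝ) ^ 2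
      + ∑ j, ((∑ i, R.w' t₁ i j) - ∑ i, R.w' (t₂ + 1) i j) / OMS.lr T j :=
  telescoping_bregman_bound_general K T R hR t₁ t₂ ht₁ ht₁₂ ht₂ u hu jstar ubar hubar
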